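/- Let G be a finite connected graph with set of blocks 𝓑 and let B ∈ 𝓑. The inequality x_B ≤ 1 defines a facet of CBP(G), i.e., the set {x ∈ CBP(G) : x_B = 1} is a face of CBP(G) of dimension |𝓑| − 1. -/

import Mathlib

/-!
Every vertex `χ^𝓐` of `CBP(G)` satisfies `x_B ≤ 1`, so `{x_B = 1}` is a face, contained in a
hyperplane. It has full dimension in that hyperplane because for every block `C ≠ B` it
contains two vertices differing by `e_C`: take a set of blocks `𝓐 ∋ B` with `G[𝓐]` connected
that is maximal among those avoiding `C`. Since `G` is connected, some block outside `𝓐` meets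
`G[𝓐]`, and by maximality that block is `C`; so `χ^𝓐` and `χ^{𝓐 ∪ {C}} = χ^𝓐 + e_C` both lie
on the face.
-/

open Set

noncomputable section

namespace ConnectedBlocksPaper

variable {V : Type} [Fintype V] [DecidableEq V]

/-- A subgraph is 2-connected: at least 3 vertices and removing any vertex keeps it connected. -/
def IsTwoConnectedSub (G : SimpleGraph V) (H : G.Subgraph) : Prop :=
  3 ≤ H.verts.ncard ∧ ∀ v ∈ H.verts, (H.deleteVerts {v}).Connected

/-- A block of `G`: a maximal 2-connected subgraph, or a bridge together with its two
incident vertices. -/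
def IsBlock (G : SimpleGraph V) (B : G.Subgraph) : Prop :=
  (IsTwoConnectedSub G B ∧ ∀ B' : G.Subgraph, IsTwoConnectedSub G B' → B ≤ B' → B' = B)
  ∨ (∃ (u v : V) (h : G.Adj u v), G.IsBridge s(u, v) ∧ B = G.subgraphOfAdj h)

/-- The set `𝓑` of blocks of `G`, as a type. -/
abbrev Block (G : SimpleGraph V) := {B : G.Subgraph // IsBlock G B}

/-- The subgraph `G[𝓐]` induced by a set of blocks. -/
def blockUnion (G : SimpleGraph V) (𝓐 : Set (Block G)) : G.Subgraph :=
  ⨆ B ∈ 𝓐, (B : G.Subgraph)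

/-- `G[𝓐]` is connected (the empty set of blocks counts as connected). -/
def ConnBlocks (G : SimpleGraph V) (𝓐 : Set (Block G)) : Prop :=
  𝓐 = ∅ ∨ (blockUnion G 𝓐).Connected

/-- The incidence vector `χ^𝓐 ∈ {0,1}^𝓑` of a set of blocks `𝓐 ⊆ 𝓑`. -/
def incVec (G : SimpleGraph V) (𝓐 : Set (Block G)) : Block G → ℝ :=
  Set.indicator 𝓐 1

/-- The connected blocks polytope `CBP(G) ⊆ ℝ^𝓑`. -/
def CBP (G : SimpleGraph V) : Set (Block G → ℝ) :=
  convexHull ℝ {x | ∃ 𝓐 : Set (Block G), ConnBlocks G 𝓐 ∧ x = incVec G 𝓐}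

/-- `F` is a face of the convex set `P`. -/
def IsFaceOf {E : Type*} [AddCommGroup E] [Module ℝ E] (P F : Set E) : Prop :=
  F ⊆ P ∧ Convex ℝ F ∧
    ∀ x ∈ P, ∀ y ∈ P, ∀ t : ℝ, 0 < t → t < 1 →
      t • x + (1 - t) • y ∈ F → x ∈ F ∧ y ∈ F

/-- The dimension of a polytope: the dimension of its affine hull. -/
def polyDim {E : Type*} [AddCommGroup E] [Module ℝ E] (P : Set E) : ℕ :=
  Module.finrank ℝ (affineSpan ℝ P).direction

/-- A facet is a face of dimension `dim P - 1`. -/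
def IsFacetOf {E : Type*} [AddCommGroup E] [Module ℝ E] (P F : Set E) : Prop :=
  IsFaceOf P F ∧ polyDim F = polyDim P - 1

/-- `v` is a cut vertex of `G`: deleting `v` from the connected graph `G` leaves more than
one component. -/
def IsCutVertex (G : SimpleGraph V) (v : V) : Prop :=
  ¬ (G.induce ({v}ᶜ : Set V)).Preconnected

/-- `𝓑⟨𝓐⟩`: the smallest set of blocks inducing a connected subgraph and containing `𝓐`. -/
def blockClosure (G : SimpleGraph V) (𝓐 : Set (Block G)) : Set (Block G) :=
  ⋂₀ {𝓒 : Set (Block G) | 𝓐 ⊆ 𝓒 ∧ ConnBlocks G 𝓒}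

/-- An independent set of blocks: no two blocks share a common vertex. -/
def IndepBlocks (G : SimpleGraph V) (𝓘 : Set (Block G)) : Prop :=
  ∀ B₁ ∈ 𝓘, ∀ B₂ ∈ 𝓘, B₁ ≠ B₂ →
    ((B₁ : G.Subgraph).verts ∩ (B₂ : G.Subgraph).verts) = ∅

/-- `(𝓘, α)` is an independent blocks inequality. -/
def IsIBI (G : SimpleGraph V) (𝓘 : Set (Block G)) (α : Block G → ℤ) : Prop :=
  IndepBlocks G 𝓘 ∧
  (∀ B, B ∉ blockClosure G 𝓘 → α B = 0) ∧
  (∀ B ∈ 𝓘, α B = 1) ∧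
  (∀ B ∈ blockClosure G 𝓘 \ 𝓘, α B ≤ 0) ∧
  (∑ᶠ B ∈ blockClosure G 𝓘 \ 𝓘, α B = -((𝓘.ncard : ℤ) - 1)) ∧
  (∀ I ⊆ 𝓘, ∑ᶠ B ∈ blockClosure G I \ 𝓘, α B ≤ -((I.ncard : ℤ) - 1))

/-- `𝓑[H]`: the set of blocks (of `G`) of the subgraph `H`. -/
def blocksOf (G : SimpleGraph V) (H : G.Subgraph) : Set (Block G) :=
  {B : Block G | (B : G.Subgraph) ≤ H}

/-- `𝒦_v`: the components of `G - v` with `v` (and its incident edges) added back. -/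
def Kv (G : SimpleGraph V) (v : V) : Set G.Subgraph :=
  {H | ∃ C : (G.induce ({v}ᶜ : Set V)).ConnectedComponent,
        H = (⊤ : G.Subgraph).induce (Subtype.val '' C.supp ∪ {v})}

/-- A polytope is simple if every vertex lies in exactly `dim P` facets. -/
def IsSimplePolytope {E : Type*} [AddCommGroup E] [Module ℝ E] (P : Set E) : Prop :=
  ∀ x ∈ P.extremePoints ℝ, {F : Set E | IsFacetOf P F ∧ x ∈ F}.ncard = polyDim P

/-- A simplex: the convex hull of an affinely independent finite set. -/
def IsSimplex {E : Type*} [AddCommGroup E] [Module ℝ E] (F : Set E) : Prop :=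
  ∃ s : Finset E, AffineIndependent ℝ ((↑) : s → E) ∧ F = convexHull ℝ (s : Set E)

/-- A polytope is simplicial if every facet is a simplex. -/
def IsSimplicialPolytope {E : Type*} [AddCommGroup E] [Module ℝ E] (P : Set E) : Prop :=
  ∀ F : Set E, IsFacetOf P F → IsSimplex F

/-- The graph of a polytope: extreme points, adjacent when they span a 1-dimensional face. -/
def polyGraph {E : Type*} [AddCommGroup E] [Module ℝ E] (P : Set E) : SimpleGraph E where
  Adj x y := x ≠ y ∧ x ∈ P.extremePoints ℝ ∧ y ∈ P.extremePoints ℝ ∧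
    IsFaceOf P (segment ℝ x y) ∧ polyDim (segment ℝ x y) = 1
  symm := by
    constructor
    rintro x y ⟨hxy, hx, hy, hF, hd⟩
    exact ⟨hxy.symm, hy, hx, by rwa [segment_symm], by rwa [segment_symm]⟩
  loopless := by constructor; rintro x ⟨h, -⟩; exact h rfl

end ConnectedBlocksPaper

namespace SimpleGraph

variable {V : Type*} {G : SimpleGraph V}

theorem Subgraph.connected_deleteVerts_of_walk {H : G.Subgraph} {x u v : V} (r : G.Walk u v)
    (hle : r.toSubgraph ≤ H) (hxr : x ∉ r.support)
    (hverts : H.verts ⊆ insert x {w | w ∈ r.support}) : (H.deleteVerts {x}).Connected := by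
  have hx : ∀ {w}, w ∈ r.toSubgraph.verts → w ∉ ({x} : Set V) := by
    rintro w hw rfl
    exact hxr (r.mem_verts_toSubgraph.1 hw)
  have hverts_eq : r.toSubgraph.verts = (H.deleteVerts {x}).verts := by
    refine Set.Subset.antisymm (fun w hw => ⟨hle.1 hw, hx hw⟩) ?_
    rintro w ⟨hw, hwx⟩
    exact r.mem_verts_toSubgraph.2 ((hverts hw).resolve_left hwx)
  refine r.toSubgraph_connected.mono ⟨hverts_eq.le, fun a b hab => ?_⟩ hverts_eq
  exact ⟨hverts_eq.subset hab.fst_mem, hverts_eq.subset hab.snd_mem, hle.2 hab⟩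

/-- Deleting the base point of a cycle leaves the path that traverses the rest of it. -/
theorem Walk.IsCycle.connected_deleteVerts_toSubgraph {x : V} {p : G.Walk x x}
    (hp : p.IsCycle) : (p.toSubgraph.deleteVerts {x}).Connected := by
  cases p with
  | nil => exact absurd hp Walk.not_isCycle_nil
  | cons h q =>
    have hq : q.reverse.IsPath := ((Walk.cons_isCycle_iff q h).1 hp).1.reverse
    have hnil : ¬ q.reverse.Nil := fun hn => h.ne hn.eq
    have hsupp : x :: q.reverse.tail.support = q.reverse.support := Walk.cons_support_tail hnil
    refine Subgraph.connected_deleteVerts_of_walk q.reverse.tail ?_ ?_ ?_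
    · calc q.reverse.tail.toSubgraph ≤ q.reverse.toSubgraph := by
            conv_rhs => rw [← Walk.cons_tail_eq _ hnil]
            exact le_sup_right
        _ = q.toSubgraph := q.toSubgraph_reverse
        _ ≤ (Walk.cons h q).toSubgraph := le_sup_right
    · have := hq.support_nodup
      rw [← hsupp] at this
      exact (List.nodup_cons.1 this).1
    · intro w hw
      rw [Walk.mem_verts_toSubgraph, Walk.support_cons, List.mem_cons, ← List.mem_reverse,
        ← Walk.support_reverse, ← hsupp, List.mem_cons] at hw
      exact hw.elim Or.inl id

end SimpleGraph

namespace ConnectedBlocksPaper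

open SimpleGraph

theorem isFaceOf_setOf_eq_of_forall_le {E : Type*} [AddCommGroup E] [Module ℝ E] {P : Set E}
    (hP : Convex ℝ P) (f : E →ₗ[ℝ] ℝ) {c : ℝ} (hf : ∀ x ∈ P, f x ≤ c) :
    IsFaceOf P {x ∈ P | f x = c} := by
  refine ⟨fun x hx => hx.1, hP.inter (convex_hyperplane f.isLinear c), ?_⟩
  rintro x hx y hy t ht0 ht1 ⟨-, hz⟩
  rw [map_add, map_smul, map_smul, smul_eq_mul, smul_eq_mul] at hz
  have hx' := hf x hx
  have hy' := hf y hy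
  exact ⟨⟨hx, by nlinarith⟩, ⟨hy, by nlinarith⟩⟩

theorem polyDim_eq_card_sub_one {ι : Type*} [Fintype ι] [DecidableEq ι] {F : Set (ι → ℝ)}
    {i : ι} {c : ℝ} (hF : ∀ x ∈ F, x i = c)
    (hstep : ∀ j ≠ i, ∃ x ∈ F, x + Pi.single j 1 ∈ F) :
    polyDim F = Fintype.card ι - 1 := by
  rw [polyDim, direction_affineSpan]
  have hD_ker :
      vectorSpan ℝ F ≤ LinearMap.ker (LinearMap.proj i : (ι → ℝ) →ₗ[ℝ] ℝ) := by
    rw [vectorSpan_def, Submodule.span_le]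
    rintro _ ⟨x, hx, y, hy, rfl⟩
    simp [hF x hx, hF y hy]
  have hD_ne_top : vectorSpan ℝ F ≠ ⊤ := by
    intro h
    have hmem : Pi.single i (1 : ℝ) ∈ vectorSpan ℝ F := h ▸ Submodule.mem_top
    simpa using hD_ker hmem
  have hsingle : ∀ j : {j // j ≠ i}, Pi.single (j : ι) (1 : ℝ) ∈ vectorSpan ℝ F := by
    rintro ⟨j, hj⟩
    obtain ⟨x, hx, hx'⟩ := hstep j hj
    simpa using vsub_mem_vectorSpan ℝ hx' hx
  have hli : LinearIndependent ℝ fun j => (⟨_, hsingle j⟩ : vectorSpan ℝ F) := by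
    apply LinearIndependent.of_comp (vectorSpan ℝ F).subtype
    exact (Pi.linearIndependent_single_one ι ℝ).comp _ Subtype.val_injective
  have hlower := hli.fintype_card_le_finrank
  have hupper := Submodule.finrank_lt hD_ne_top
  rw [Fintype.card_subtype_compl, Fintype.card_subtype_eq] at hlower
  rw [Module.finrank_fintype_fun_eq_card] at hupper
  omega

section

variable {V : Type} {G : SimpleGraph V}

theorem IsTwoConnectedSub.connected {H : G.Subgraph} (hH : IsTwoConnectedSub G H) :
    H.Connected := by
  obtain ⟨h3, hdel⟩ := hH
  refine Subgraph.connected_iff.2 ⟨⟨fun ⟨x, hx⟩ ⟨y, hy⟩ => ?_⟩,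
    Set.nonempty_of_ncard_ne_zero (by omega)⟩
  have hxy : ({x, y} : Set V).ncard < H.verts.ncard :=
    (Set.ncard_insert_le x {y}).trans_lt (by rw [Set.ncard_singleton]; omega)
  obtain ⟨z, hz, hzxy⟩ := Set.exists_mem_notMem_of_ncard_lt_ncard hxy (Set.toFinite _)
  have hx' : x ∈ (H.deleteVerts {z}).verts := ⟨hx, fun h => hzxy (h ▸ Set.mem_insert x {y})⟩
  have hy' : y ∈ (H.deleteVerts {z}).verts :=
    ⟨hy, fun h => hzxy (h ▸ Set.mem_insert_of_mem x rfl)⟩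
  exact ((hdel z hz).coe ⟨x, hx'⟩ ⟨y, hy'⟩).map (Subgraph.inclusion Subgraph.deleteVerts_le)

theorem IsBlock.connected {B : G.Subgraph} (hB : IsBlock G B) : B.Connected := by
  rcases hB with ⟨h2, -⟩ | ⟨u, v, h, -, rfl⟩
  · exact h2.connected
  · exact Subgraph.subgraphOfAdj_connected h

theorem isTwoConnectedSub_toSubgraph_of_isCycle {v : V} {p : G.Walk v v} (hp : p.IsCycle) :
    IsTwoConnectedSub G p.toSubgraph := by
  refine ⟨?_, fun x hx => ?_⟩
  · have hnil := hp.not_nil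
    have h1 := p.toSubgraph_adj_snd hnil
    have h2 := p.toSubgraph_adj_penultimate hnil
    have hsub : ({v, p.snd, p.penultimate} : Set V) ⊆ p.toSubgraph.verts := by
      simp only [Set.insert_subset_iff, Set.singleton_subset_iff]
      exact ⟨h1.fst_mem, h1.snd_mem, h2.fst_mem⟩
    have h3 : ({v, p.snd, p.penultimate} : Set V).ncard = 3 :=
      Set.ncard_eq_three.2 ⟨_, _, _, h1.ne, h2.ne.symm, hp.snd_ne_penultimate, rfl⟩
    exact h3 ▸ Set.ncard_le_ncard hsub (p.verts_toSubgraph ▸ p.support.finite_toSet)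
  · classical
    rw [Walk.mem_verts_toSubgraph] at hx
    rw [← p.toSubgraph_rotate hx]
    exact (hp.rotate hx).connected_deleteVerts_toSubgraph

/-- A non-bridge lies on a cycle, and a maximal 2-connected subgraph containing that cycle is a
block. -/
theorem exists_isBlock_of_adj [Finite V] {a b : V} (h : G.Adj a b) :
    ∃ B : G.Subgraph, IsBlock G B ∧ a ∈ B.verts ∧ b ∈ B.verts := by
  by_cases hbr : G.IsBridge s(a, b)
  · exact ⟨G.subgraphOfAdj h, Or.inr ⟨a, b, h, hbr, rfl⟩, by simp, by simp⟩
  rw [isBridge_iff_forall_cycle_notMem (G.mem_edgeSet.2 h)] at hbr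
  push Not at hbr
  obtain ⟨u, p, hp, he⟩ := hbr
  obtain ⟨M, ⟨hM, hpM⟩, hmax⟩ := Set.Finite.exists_maximalFor id
    {K : G.Subgraph | IsTwoConnectedSub G K ∧ p.toSubgraph ≤ K} (Set.toFinite _)
    ⟨p.toSubgraph, isTwoConnectedSub_toSubgraph_of_isCycle hp, le_rfl⟩
  refine ⟨M, Or.inl ⟨hM, fun K hK hMK => le_antisymm (hmax ⟨hK, hpM.trans hMK⟩ hMK) hMK⟩,
    hpM.1 ?_, hpM.1 ?_⟩
  · exact p.mem_verts_toSubgraph.2 (p.fst_mem_support_of_mem_edges he)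
  · exact p.mem_verts_toSubgraph.2 (p.snd_mem_support_of_mem_edges he)

theorem le_blockUnion {𝓐 : Set (Block G)} {B : Block G} (hB : B ∈ 𝓐) :
    (B : G.Subgraph) ≤ blockUnion G 𝓐 :=
  le_biSup _ hB

theorem blockUnion_insert (C : Block G) (𝓐 : Set (Block G)) :
    blockUnion G (insert C 𝓐) = (C : G.Subgraph) ⊔ blockUnion G 𝓐 := by
  rw [blockUnion, blockUnion, iSup_insert]

theorem blockUnion_singleton (B : Block G) : blockUnion G {B} = (B : G.Subgraph) := by
  simp [blockUnion]

/-- If `G[𝓐]` misses a vertex, some edge leaves it, and the block of that edge is new. -/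
theorem exists_block_notMem_meets_blockUnion [Finite V] (hG : G.Connected) {𝓐 : Set (Block G)}
    (hne : 𝓐.Nonempty) (hproper : 𝓐 ≠ Set.univ) :
    ∃ C ∉ 𝓐, ((C : G.Subgraph).verts ∩ (blockUnion G 𝓐).verts).Nonempty := by
  set W := (blockUnion G 𝓐).verts
  by_cases hW : ∀ u, u ∈ W
  · obtain ⟨C, hC⟩ := (Set.ne_univ_iff_exists_notMem 𝓐).1 hproper
    obtain ⟨x, hx⟩ := C.2.connected.nonempty
    exact ⟨C, hC, x, hx, hW x⟩
  push Not at hW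
  obtain ⟨u, hu⟩ := hW
  obtain ⟨B₀, hB₀⟩ := hne
  obtain ⟨a, ha⟩ := B₀.2.connected.nonempty
  obtain ⟨d, -, hd₁, hd₂⟩ :=
    (hG.preconnected a u).some.exists_boundary_dart W ((le_blockUnion hB₀).1 ha) hu
  obtain ⟨M, hM, hM₁, hM₂⟩ := exists_isBlock_of_adj d.adj
  exact ⟨⟨M, hM⟩, fun hmem => hd₂ ((le_blockUnion hmem).1 hM₂), d.fst, hM₁, hd₁⟩

theorem exists_notMem_connected_blockUnion_insert [Finite V] (hG : G.Connected)
    {𝓐 : Set (Block G)} (hne : 𝓐.Nonempty) (hconn : (blockUnion G 𝓐).Connected)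
    (hproper : 𝓐 ≠ Set.univ) :
    ∃ C ∉ 𝓐, (blockUnion G (insert C 𝓐)).Connected := by
  obtain ⟨C, hC, hmeet⟩ := exists_block_notMem_meets_blockUnion hG hne hproper
  rw [← Subgraph.verts_inf] at hmeet
  exact ⟨C, hC, blockUnion_insert C 𝓐 ▸
    Subgraph.connected_sup C.2.connected.preconnected hconn.preconnected hmeet⟩

/-- Take `𝓐 ∋ B` maximal among connected block sets avoiding `C`: the block by which it can
still be extended must be `C`. -/
theorem exists_connected_blockUnion_and_insert [Finite V] (hG : G.Connected) {B C : Block G}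
    (hCB : C ≠ B) :
    ∃ 𝓐 : Set (Block G), B ∈ 𝓐 ∧ C ∉ 𝓐 ∧ (blockUnion G 𝓐).Connected ∧
      (blockUnion G (insert C 𝓐)).Connected := by
  obtain ⟨𝓐, ⟨hB, hC, hconn⟩, hmax⟩ := Set.Finite.exists_maximalFor id
    {𝓐 : Set (Block G) | B ∈ 𝓐 ∧ C ∉ 𝓐 ∧ (blockUnion G 𝓐).Connected}
    (Set.toFinite _) ⟨{B}, rfl, hCB, blockUnion_singleton B ▸ B.2.connected⟩
  obtain ⟨C', hC', hconn'⟩ :=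
    exists_notMem_connected_blockUnion_insert hG ⟨B, hB⟩ hconn
      ((Set.ne_univ_iff_exists_notMem _).2 ⟨C, hC⟩)
  obtain rfl | hne := eq_or_ne C' C
  · exact ⟨𝓐, hB, hC, hconn, hconn'⟩
  · have hC'' : C ∉ insert C' 𝓐 := by simp [hne.symm, hC]
    exact absurd (hmax ⟨Set.mem_insert_of_mem _ hB, hC'', hconn'⟩ (Set.subset_insert C' 𝓐)
      (Set.mem_insert C' 𝓐)) hC'

theorem incVec_insert [DecidableEq (Block G)] {𝓐 : Set (Block G)} {C : Block G}
    (hC : C ∉ 𝓐) :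
    incVec G (insert C 𝓐) = incVec G 𝓐 + Pi.single C 1 := by
  ext D
  by_cases hD : D = C
  · subst hD
    simp [incVec, hC]
  · by_cases hD𝓐 : D ∈ 𝓐 <;> simp [incVec, hD, hD𝓐]

theorem apply_le_one_of_mem_CBP {x : Block G → ℝ} (hx : x ∈ CBP G) (B : Block G) :
    x B ≤ 1 := by
  refine convexHull_min ?_ (convex_halfSpace_le (LinearMap.proj B).isLinear 1) hx
  rintro _ ⟨𝓐, -, rfl⟩
  show incVec G 𝓐 B ≤ 1
  exact Set.indicator_apply_le' (fun _ => le_rfl) fun _ => zero_le_one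

theorem incVec_mem_CBP_and_eq_one {𝓐 : Set (Block G)} (h𝓐 : (blockUnion G 𝓐).Connected)
    {B : Block G} (hB : B ∈ 𝓐) : incVec G 𝓐 ∈ {x ∈ CBP G | x B = 1} :=
  ⟨subset_convexHull ℝ _ ⟨𝓐, Or.inr h𝓐, rfl⟩, Set.indicator_of_mem hB 1⟩

end

variable {V : Type} [Fintype V] [DecidableEq V]

/-- for every block `B`, the inequality `x_B ≤ 1` defines a facet of `CBP(G)`. -/
theorem cbp_facet_le_one (G : SimpleGraph V) (hG : G.Connected) (B : Block G) :
    IsFaceOf (CBP G) {x ∈ CBP G | x B = 1} ∧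
      polyDim {x ∈ CBP G | x B = 1} = Nat.card (Block G) - 1 := by
  classical
  have hface := isFaceOf_setOf_eq_of_forall_le (convex_convexHull ℝ _)
    (LinearMap.proj B : (Block G → ℝ) →ₗ[ℝ] ℝ) fun x hx => apply_le_one_of_mem_CBP hx B
  refine ⟨hface, ?_⟩
  rw [Nat.card_eq_fintype_card]
  refine polyDim_eq_card_sub_one (fun x hx => hx.2) fun C hC => ?_
  obtain ⟨𝓐, hB, hC𝓐, hconn, hconn'⟩ := exists_connected_blockUnion_and_insert hG hC
  refine ⟨incVec G 𝓐, incVec_mem_CBP_and_eq_one hconn hB, ?_⟩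
  rw [← incVec_insert hC𝓐]
  exact incVec_mem_CBP_and_eq_one hconn' (Set.mem_insert_of_mem C hB)

end ConnectedBlocksPaper
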